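/- arXiv:0712.2223 — 4 statements merged into one kernel-verified Lean document; each statement's English description precedes it below -/
import Mathlib

section
/- Let n, k₁, k₂ be natural numbers with k₁, k₂ ≤ n. Let H₁ be an (n−k₁)×n matrix and H₂ an (n−k₂)×n matrix over F₂[D], with Smith decompositions Hᵢ = Aᵢ·[I_{n−kᵢ} 0]·Bᵢ where Aᵢ, Bᵢ are invertible over F₂[D]; let B_{ia} be the first n−kᵢ rows and B_{ib} the last kᵢ rows of Bᵢ. Set E = B_{1a}·σ(B_{2a})ᵀ (an (n−k₁)×(n−k₂) matrix over F₂[D,D⁻¹]) and F = B_{1a}·σ(B_{2b})ᵀ (an (n−k₁)×k₂ matrix). Then A₁⁻¹·H₁·σ(B₂)ᵀ equals the block matrix [E F], and A₂⁻¹·H₂·B₂⁻¹ equals the block matrix [I_{n−k₂} 0]. -/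
open Matrix LaurentPolynomial

/-! Cancelling `A₁` leaves `[I 0]·B₁·σ(B₂)ᵀ = B₁ₐ·σ(B₂)ᵀ`, and splitting the columns of
`σ(B₂)ᵀ` — the rows of `B₂` — into the first `n - k₂` and the last `k₂` gives `[E F]`. -/

/-- The `m × n` matrix `[I 0]` (entry `1` iff row and column index agree as naturals). -/
def oneZero (R : Type*) [Semiring R] (m n : ℕ) : Matrix (Fin m) (Fin n) R :=
  Matrix.of fun i j => if (i : ℕ) = (j : ℕ) then (1 : R) else 0

/-- Concatenate an `r × a` matrix and an `r × b` matrix into an `r × c` matrix,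
given `a + b = c`. -/
def hcat {R : Type*} {r a b c : ℕ} (h : a + b = c)
    (M : Matrix (Fin r) (Fin a) R) (N : Matrix (Fin r) (Fin b) R) :
    Matrix (Fin r) (Fin c) R :=
  (Matrix.fromCols M N).submatrix id fun j => finSumFinEquiv.symm (Fin.cast h.symm j)

lemma oneZero_map {R S : Type*} [Semiring R] [Semiring S] (f : R →+* S) (m n : ℕ) :
    (oneZero R m n).map f = oneZero S m n := by
  ext i j
  simp [oneZero, apply_ite f]

lemma oneZero_mul {R : Type*} [Semiring R] {m n p : ℕ} (h : m ≤ n)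
    (M : Matrix (Fin n) (Fin p) R) :
    oneZero R m n * M = M.submatrix (Fin.castLE h) id := by
  ext i j
  rw [mul_apply, Finset.sum_eq_single (Fin.castLE h i)]
  · simp [oneZero]
  · intro k _ hk
    rw [oneZero, of_apply, if_neg fun hik => hk (Fin.ext hik.symm), zero_mul]
  · simp

lemma hcat_submatrix_castLE_natAdd {R : Type*} {r a b c : ℕ} (h : a + b = c)
    (M : Matrix (Fin r) (Fin c) R) :
    hcat h (M.submatrix id (Fin.castLE (by omega)))
      (M.submatrix id fun j : Fin b => (⟨a + j, by omega⟩ : Fin c)) = M := by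
  subst h
  ext i j
  induction j using Fin.addCases with
  | left j =>
    simp only [hcat, Fin.cast_eq_self, submatrix_apply, id_eq,
      finSumFinEquiv_symm_apply_castAdd, fromCols_apply_inl]
    rfl
  | right j =>
    simp only [hcat, Fin.cast_eq_self, submatrix_apply, id_eq,
      finSumFinEquiv_symm_apply_natAdd, fromCols_apply_inr]
    rfl

/-- With Smith decompositions `Hᵢ = Aᵢ·[I 0]·Bᵢ`, setting
`E = B₁ₐ·σ(B₂ₐ)ᵀ` and `F = B₁ₐ·σ(B₂ᵦ)ᵀ`, we have `A₁⁻¹·H₁·σ(B₂)ᵀ = [E F]` and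
`A₂⁻¹·H₂·B₂⁻¹ = [I 0]`. -/
theorem stmt1 (n k₁ k₂ : ℕ) (hk₂ : k₂ ≤ n)
    (H₁ : Matrix (Fin (n - k₁)) (Fin n) (Polynomial (ZMod 2)))
    (H₂ : Matrix (Fin (n - k₂)) (Fin n) (Polynomial (ZMod 2)))
    (A₁ : Matrix (Fin (n - k₁)) (Fin (n - k₁)) (Polynomial (ZMod 2)))
    (A₂ : Matrix (Fin (n - k₂)) (Fin (n - k₂)) (Polynomial (ZMod 2)))
    (B₁ B₂ : Matrix (Fin n) (Fin n) (Polynomial (ZMod 2)))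
    (hA₁ : IsUnit A₁.det) (hA₂ : IsUnit A₂.det)
    (hB₂ : IsUnit B₂.det)
    (hH₁ : H₁ = A₁ * oneZero (Polynomial (ZMod 2)) (n - k₁) n * B₁)
    (hH₂ : H₂ = A₂ * oneZero (Polynomial (ZMod 2)) (n - k₂) n * B₂) :
    let ι : Polynomial (ZMod 2) → LaurentPolynomial (ZMod 2) := Polynomial.toLaurent
    let σ : LaurentPolynomial (ZMod 2) → LaurentPolynomial (ZMod 2) := LaurentPolynomial.invert
    -- the first `n - kᵢ` rows of `Bᵢ`
    let B₁a := B₁.submatrix (fun i : Fin (n - k₁) => Fin.castLE (Nat.sub_le n k₁) i) id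
    let B₂a := B₂.submatrix (fun i : Fin (n - k₂) => Fin.castLE (Nat.sub_le n k₂) i) id
    -- the last `k₂` rows of `B₂`
    let B₂b := B₂.submatrix
      (fun i : Fin k₂ => (⟨(n - k₂) + (i : ℕ), by omega⟩ : Fin n)) id
    let E := (B₁a.map ι) * ((B₂a.map ι).map σ)ᵀ
    let F := (B₁a.map ι) * ((B₂b.map ι).map σ)ᵀ
    ((A₁.map ι)⁻¹ * (H₁.map ι) * ((B₂.map ι).map σ)ᵀ =
        hcat (by omega : (n - k₂) + k₂ = n) E F)
      ∧ A₂⁻¹ * H₂ * B₂⁻¹ = oneZero (Polynomial (ZMod 2)) (n - k₂) n := by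
  intro ι σ B₁a B₂a B₂b E F
  have hA₁ι : IsUnit (A₁.map Polynomial.toLaurent).det := by
    simpa [RingHom.map_det] using hA₁.map Polynomial.toLaurent
  refine ⟨?_, ?_⟩
  · rw [hH₁, Matrix.map_mul, Matrix.map_mul, Matrix.mul_assoc (A₁.map ι),
      nonsing_inv_mul_cancel_left _ _ hA₁ι,
      oneZero_map Polynomial.toLaurent, oneZero_mul (Nat.sub_le n k₁)]
    exact (hcat_submatrix_castLE_natAdd _ _).symm
  · rw [hH₂, Matrix.mul_assoc A₂, nonsing_inv_mul_cancel_left _ _ hA₂,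
    mul_nonsing_inv_cancel_right _ _ hB₂]
end

section
/- Let H₁ be an (n−k₁)×n matrix and H₂ an (n−k₂)×n matrix over F₂[D,D⁻¹], and let G be the (2n−k₁−k₂)×2n matrix whose Z part is [H₁; 0] and whose X part is [0; H₂]. Let K(G) be the Gram matrix of the shifted symplectic product on the rows of G. Then the rank of K(G) over F₂(D) equals 2·c, where c is the rank over F₂(D) of H₁·σ(H₂)ᵀ = H₁(D)·H₂ᵀ(D⁻¹). (Thus the entanglement-assisted quantum convolutional code built from H₁ and H₂ requires exactly c ebits per frame.) -/
/-! With `M = H₁ σ(H₂)ᵀ`, the Gram matrix of the CSS check matrix is block antidiagonal with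
blocks `σ(H₁) H₂ᵀ` and `σ(H₂) H₁ᵀ = Mᵀ`. Since a ring automorphism of `F₂(D)` is determined by
the image of `D`, `σ` is an involution, so the first block is `σ(M)`. Applying a field
automorphism entrywise preserves rank, as does transposition, so each block has rank `c`. -/

open Matrix LaurentPolynomial

namespace RatFunc

variable {p : ℕ} [Fact p.Prime]

theorem ringHom_ext_zmod {L : Type*} [Semiring L] {f g : RatFunc (ZMod p) →+* L}
    (h : f X = g X) : f = g :=
  IsLocalization.ringHom_ext (nonZeroDivisors (Polynomial (ZMod p))) <|
    Polynomial.ringHom_ext' (RingHom.ext_zmod _ _) (by simp [algebraMap_X, h])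

theorem involutive_of_apply_X_eq_inv {σ : RatFunc (ZMod p) ≃+* RatFunc (ZMod p)}
    (hσ : σ X = X⁻¹) : Function.Involutive σ := by
  have h : (σ : RatFunc (ZMod p) →+* RatFunc (ZMod p)).comp σ = RingHom.id _ :=
    ringHom_ext_zmod (by simp [hσ, map_inv₀])
  exact RingHom.congr_fun h

end RatFunc

theorem Submodule.finrank_prod {K V W : Type*} [Field K] [AddCommGroup V] [Module K V]
    [AddCommGroup W] [Module K W] [FiniteDimensional K V] [FiniteDimensional K W]
    (p : Submodule K V) (q : Submodule K W) :
    Module.finrank K (p.prod q) = Module.finrank K p + Module.finrank K q := by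
  have hinj : Function.Injective (p.subtype.prodMap q.subtype) :=
    Prod.map_injective.2 ⟨p.injective_subtype, q.injective_subtype⟩
  rw [← Module.finrank_prod, (LinearEquiv.ofInjective _ hinj).finrank_eq,
    LinearMap.range_prodMap, range_subtype, range_subtype]

namespace Matrix

section Field

variable {K : Type*} [Field K] {m n m' n' : Type*}

theorem rank_map_ringEquiv [Fintype n] (e : K ≃+* K) (M : Matrix m n K) :
    (M.map e).rank = M.rank := by
  have mem : ∀ w : m → K, w ∈ LinearMap.range M.mulVecLin ↔
      (fun i => e (w i)) ∈ LinearMap.range (M.map e).mulVecLin := by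
    intro w
    constructor
    · rintro ⟨v, rfl⟩
      exact ⟨e ∘ v, funext fun i => (RingHom.map_mulVec (e : K →+* K) M v i).symm⟩
    · rintro ⟨v, hv⟩
      refine ⟨e.symm ∘ v, funext fun i => e.injective ?_⟩
      rw [← congrFun hv i, mulVecLin_apply, mulVecLin_apply, ← RingHom.coe_coe e,
        RingHom.map_mulVec]
      simp [Function.comp_def]
  let j : LinearMap.range M.mulVecLin ≃+ LinearMap.range (M.map e).mulVecLin :=
    { (Equiv.piCongrRight fun _ => e.toEquiv).subtypeEquiv mem with
      map_add' := fun _ _ => Subtype.ext <| funext fun _ => map_add e _ _ }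
  exact congrArg Cardinal.toNat
    (rank_eq_of_equiv_equiv e j e.bijective fun _ _ => Subtype.ext <| funext fun _ =>
      map_mul e _ _).symm

theorem rank_map_mul_transpose_of_involutive [Fintype n] [Fintype m'] {σ : K ≃+* K}
    (hσ : Function.Involutive σ) (A : Matrix m n K) (B : Matrix m' n K) :
    (A.map σ * Bᵀ).rank = (A * (B.map σ)ᵀ).rank := by
  rw [← rank_map_ringEquiv σ (A * (B.map σ)ᵀ), ← RingEquiv.coe_toRingHom, Matrix.map_mul,
    transpose_map, map_map, RingEquiv.coe_toRingHom, hσ.comp_self, map_id]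

theorem rank_fromBlocks_zero₁₂_zero₂₁ [Fintype m] [Fintype m'] [Fintype n] [Fintype n']
    (A : Matrix m n K) (B : Matrix m' n' K) : (fromBlocks A 0 0 B).rank = A.rank + B.rank := by
  let E₁ := LinearEquiv.sumArrowLequivProdArrow n n' K K
  let E₂ := LinearEquiv.sumArrowLequivProdArrow m m' K K
  have h : (fromBlocks A 0 0 B).mulVecLin =
      E₂.symm.toLinearMap ∘ₗ A.mulVecLin.prodMap B.mulVecLin ∘ₗ E₁.toLinearMap := by
    ext v (i | i) <;> simp [E₁, E₂, fromBlocks_mulVec] <;> rfl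
  rw [rank, h, LinearMap.range_comp, LinearMap.range_comp, LinearEquiv.range, Submodule.map_top,
    LinearMap.range_prodMap, LinearEquiv.finrank_map_eq, Submodule.finrank_prod, rank, rank]

theorem rank_fromBlocks_zero₁₁_zero₂₂ [Fintype m] [Fintype m'] [Fintype n] [Fintype n']
    (A : Matrix m n' K) (B : Matrix m' n K) : (fromBlocks 0 A B 0).rank = A.rank + B.rank := by
  rw [← rank_submatrix _ (Equiv.refl _) (Equiv.sumComm n' n), ← rank_fromBlocks_zero₁₂_zero₂₁]
  simp

end Field

section Gram

variable {R : Type*} [Semiring R] {m m' n : Type*} [Fintype n] [DecidableEq n]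

def shiftedSymplecticGram (σ : R → R) (G : Matrix m (n ⊕ n) R) : Matrix m m R :=
  of fun p q => (fun j => σ (G p j)) ⬝ᵥ (fromBlocks 0 1 1 0 : Matrix (n ⊕ n) (n ⊕ n) R) *ᵥ G q

theorem shiftedSymplecticGram_fromBlocks (σ : R → R) (hσ : σ 0 = 0) (A : Matrix m n R)
    (B : Matrix m' n R) :
    shiftedSymplecticGram σ (fromBlocks A 0 0 B) =
      fromBlocks 0 (A.map σ * Bᵀ) (B.map σ * Aᵀ) 0 := by
  ext (i | i) (j | j) <;>
    simp [shiftedSymplecticGram, fromBlocks_mulVec, dotProduct, Fintype.sum_sum_type, mul_apply,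
      hσ]

end Gram

end Matrix

theorem stmt6_general (n k₁ k₂ : ℕ)
    (ψ : LaurentPolynomial (ZMod 2) →+* RatFunc (ZMod 2))
    (σ : RatFunc (ZMod 2) ≃+* RatFunc (ZMod 2)) (hσ : σ RatFunc.X = RatFunc.X⁻¹)
    (H₁ : Matrix (Fin (n - k₁)) (Fin n) (LaurentPolynomial (ZMod 2)))
    (H₂ : Matrix (Fin (n - k₂)) (Fin n) (LaurentPolynomial (ZMod 2))) :
    let J : Matrix (Fin n ⊕ Fin n) (Fin n ⊕ Fin n) (RatFunc (ZMod 2)) :=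
      Matrix.fromBlocks 0 1 1 0
    let Ω : ((Fin n ⊕ Fin n) → RatFunc (ZMod 2)) → ((Fin n ⊕ Fin n) → RatFunc (ZMod 2)) →
        RatFunc (ZMod 2) :=
      fun g g' => dotProduct (fun p => σ (g p)) (J.mulVec g')
    let G : Matrix (Fin (n - k₁) ⊕ Fin (n - k₂)) (Fin n ⊕ Fin n) (RatFunc (ZMod 2)) :=
      Matrix.fromBlocks (H₁.map ψ) 0 0 (H₂.map ψ)
    let K : Matrix (Fin (n - k₁) ⊕ Fin (n - k₂)) (Fin (n - k₁) ⊕ Fin (n - k₂))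
        (RatFunc (ZMod 2)) :=
      Matrix.of fun p q => Ω (G p) (G q)
    K.rank = 2 * ((H₁.map ψ) * (((H₂.map ψ)).map σ)ᵀ).rank := by
  show (shiftedSymplecticGram σ (fromBlocks (H₁.map ψ) 0 0 (H₂.map ψ))).rank = _
  rw [shiftedSymplecticGram_fromBlocks σ (map_zero σ), rank_fromBlocks_zero₁₁_zero₂₂,
    rank_map_mul_transpose_of_involutive (RatFunc.involutive_of_apply_X_eq_inv hσ),
    ← rank_transpose (H₁.map ψ * _), transpose_mul, transpose_transpose, two_mul]

/-- For `H₁, H₂` over `F₂[D,D⁻¹] ⊆ F₂(D)` and `G` the CSS quantum check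
matrix with Z part `[H₁; 0]` and X part `[0; H₂]`, the rank over `F₂(D)` of the Gram
matrix `K(G)` of the shifted symplectic product equals `2·c`, where
`c = rank (H₁·σ(H₂)ᵀ)` over `F₂(D)`. Here `ψ` is the inclusion `F₂[D,D⁻¹] → F₂(D)`
(determined by `ψ(D) = D`) and `σ` is the automorphism of `F₂(D)` with `σ(D) = D⁻¹`. -/
theorem stmt6 (n k₁ k₂ : ℕ) (hk₁ : k₁ ≤ n) (hk₂ : k₂ ≤ n)
    (ψ : LaurentPolynomial (ZMod 2) →+* RatFunc (ZMod 2))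
    (hψ : ψ (LaurentPolynomial.T 1) = RatFunc.X)
    (σ : RatFunc (ZMod 2) ≃+* RatFunc (ZMod 2)) (hσ : σ RatFunc.X = RatFunc.X⁻¹)
    (H₁ : Matrix (Fin (n - k₁)) (Fin n) (LaurentPolynomial (ZMod 2)))
    (H₂ : Matrix (Fin (n - k₂)) (Fin n) (LaurentPolynomial (ZMod 2))) :
    let J : Matrix (Fin n ⊕ Fin n) (Fin n ⊕ Fin n) (RatFunc (ZMod 2)) :=
      Matrix.fromBlocks 0 1 1 0
    let Ω : ((Fin n ⊕ Fin n) → RatFunc (ZMod 2)) → ((Fin n ⊕ Fin n) → RatFunc (ZMod 2)) →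
        RatFunc (ZMod 2) :=
      fun g g' => dotProduct (fun p => σ (g p)) (J.mulVec g')
    let G : Matrix (Fin (n - k₁) ⊕ Fin (n - k₂)) (Fin n ⊕ Fin n) (RatFunc (ZMod 2)) :=
      Matrix.fromBlocks (H₁.map ψ) 0 0 (H₂.map ψ)
    let K : Matrix (Fin (n - k₁) ⊕ Fin (n - k₂)) (Fin (n - k₁) ⊕ Fin (n - k₂))
        (RatFunc (ZMod 2)) :=
      Matrix.of fun p q => Ω (G p) (G q)
    K.rank = 2 * ((H₁.map ψ) * (((H₂.map ψ)).map σ)ᵀ).rank :=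
  stmt6_general n k₁ k₂ ψ σ hσ H₁ H₂
end

section
/- Let M be an m×n matrix over F₂[D] that has a right inverse over F₂[D] (there exists an n×m matrix C over F₂[D] with M·C = I_m). Let U (m×m) and V (n×n) be matrices over the Laurent polynomial ring F₂[D,D⁻¹] that are invertible over F₂[D,D⁻¹], and suppose the matrix M′ = U·M·V has all entries in F₂[D]. Then for every k with 1 ≤ k ≤ m, there exists t ≥ 0 such that D^t lies in the ideal of F₂[D] generated by the k×k minors of M′. (Equivalently: every invariant factor of M′ over F₂[D] is a power of D; column and row operations with Laurent polynomials change the invariant factors of a noncatastrophic check matrix only up to powers of D.) -/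
/-! Expanding determinants multilinearly (a weak Cauchy–Binet formula), every `k × k` minor of
`A * X * B` lies in the ideal generated by the `k × k` minors of `X`; this ideal also commutes
with base change. Since `M` has a right inverse, its `k × k` minors generate the unit ideal; as
`M = U⁻¹ M′ V⁻¹` over `F₂[D,D⁻¹]`, so do those of `M′` there. Finally `F₂[D,D⁻¹]` is the
localization of `F₂[D]` at the powers of `D`, and an ideal whose extension to a localization is
the unit ideal meets the localizing submonoid. -/

open Matrix LaurentPolynomial

/-- The set of `k × k` minors of an `m × n` matrix: determinants of submatrices obtained
by selecting `k` rows and `k` columns. -/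
def minors {R : Type*} [CommRing R] {m n : ℕ} (k : ℕ) (M : Matrix (Fin m) (Fin n) R) :
    Set R :=
  {d | ∃ f : Fin k → Fin m, ∃ g : Fin k → Fin n,
    Function.Injective f ∧ Function.Injective g ∧ d = (M.submatrix f g).det}

namespace Matrix

variable {R : Type*} [CommRing R]

section CauchyBinet

variable {κ ι : Type*} [Fintype κ] [DecidableEq κ] [Fintype ι]

theorem det_mul_eq_sum_prod_mul_det_submatrix (A : Matrix κ ι R) (P : Matrix ι κ R) :
    (A * P).det = ∑ p : κ → ι, (∏ i, A i (p i)) * (P.submatrix p id).det := by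
  have hrows : (A * P).det = detRowAlternating fun i => ∑ x, A i x • P x := by
    congr 1
    ext i j
    simp [Matrix.mul_apply]
  rw [hrows]
  exact (detRowAlternating.toMultilinearMap.map_sum fun i x => A i x • P x).trans
    (Finset.sum_congr rfl fun p _ => AlternatingMap.map_smul_univ _ _ _)

theorem det_mul_mem_span_det_submatrix_rows (A : Matrix κ ι R) (P : Matrix ι κ R) :
    (A * P).det ∈ Ideal.span (Set.range fun p : κ → ι => (P.submatrix p id).det) := by
  rw [det_mul_eq_sum_prod_mul_det_submatrix]
  exact Ideal.sum_mem _ fun p _ => Ideal.mul_mem_left _ _ (Ideal.subset_span ⟨p, rfl⟩)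

theorem det_mul_mem_span_det_submatrix_cols (Q : Matrix κ ι R) (B : Matrix ι κ R) :
    (Q * B).det ∈ Ideal.span (Set.range fun q : κ → ι => (Q.submatrix id q).det) := by
  rw [← det_transpose, transpose_mul]
  simpa only [← transpose_submatrix, det_transpose] using
    det_mul_mem_span_det_submatrix_rows Bᵀ Qᵀ

end CauchyBinet

variable {m n : ℕ}

theorem det_submatrix_mem_span_minors {k : ℕ} (X : Matrix (Fin m) (Fin n) R)
    (f : Fin k → Fin m) (g : Fin k → Fin n) :
    (X.submatrix f g).det ∈ Ideal.span (minors k X) := by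
  by_cases hfg : f.Injective ∧ g.Injective
  · exact Ideal.subset_span ⟨f, g, hfg.1, hfg.2, rfl⟩
  · convert Ideal.zero_mem _
    simp_rw [not_and_or, Function.not_injective_iff] at hfg
    obtain ⟨i, j, hfij, hij⟩ | ⟨i, j, hgij, hij⟩ := hfg
    · rw [← det_transpose, transpose_submatrix]
      exact det_zero_of_column_eq hij (by simp [hfij])
    · exact det_zero_of_column_eq hij (by simp [hgij])

theorem span_minors_mul_mul_le {m' n' : ℕ} (k : ℕ) (A : Matrix (Fin m') (Fin m) R)
    (X : Matrix (Fin m) (Fin n) R) (B : Matrix (Fin n) (Fin n') R) :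
    Ideal.span (minors k (A * X * B)) ≤ Ideal.span (minors k X) := by
  rw [Ideal.span_le]
  rintro _ ⟨f, g, -, -, rfl⟩
  rw [submatrix_mul _ _ _ id _ Function.bijective_id]
  refine Ideal.span_le.mpr ?_ (det_mul_mem_span_det_submatrix_cols _ _)
  rintro _ ⟨q, rfl⟩
  dsimp only
  rw [submatrix_submatrix, submatrix_mul _ _ _ id _ Function.bijective_id]
  refine Ideal.span_le.mpr ?_ (det_mul_mem_span_det_submatrix_rows _ _)
  rintro _ ⟨p, rfl⟩
  exact det_submatrix_mem_span_minors X p q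

theorem one_mem_span_minors_one {k : ℕ} (hk : k ≤ m) :
    (1 : R) ∈ Ideal.span (minors k (1 : Matrix (Fin m) (Fin m) R)) :=
  Ideal.subset_span ⟨Fin.castLE hk, Fin.castLE hk, Fin.castLE_injective hk,
    Fin.castLE_injective hk, by rw [submatrix_one _ (Fin.castLE_injective hk), det_one]⟩

theorem one_mem_span_minors_of_mul_eq_one {k : ℕ} (hk : k ≤ m) {M : Matrix (Fin m) (Fin n) R}
    {C : Matrix (Fin n) (Fin m) R} (hC : M * C = 1) :
    (1 : R) ∈ Ideal.span (minors k M) := by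
  have := span_minors_mul_mul_le k (1 : Matrix (Fin m) (Fin m) R) M C
  rw [Matrix.one_mul, hC] at this
  exact this (one_mem_span_minors_one hk)

theorem map_span_minors {S : Type*} [CommRing S] (φ : R →+* S) (k : ℕ)
    (X : Matrix (Fin m) (Fin n) R) :
    (Ideal.span (minors k X)).map φ = Ideal.span (minors k (X.map φ)) := by
  rw [Ideal.map_span]
  congr 1
  ext d
  constructor
  · rintro ⟨_, ⟨f, g, hf, hg, rfl⟩, rfl⟩
    exact ⟨f, g, hf, hg, φ.map_det _⟩
  · rintro ⟨f, g, hf, hg, rfl⟩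
    exact ⟨_, ⟨f, g, hf, hg, rfl⟩, φ.map_det _⟩

end Matrix

theorem IsLocalization.exists_mem_of_one_mem_map {R S : Type*} [CommRing R] [CommRing S]
    [Algebra R S] (M : Submonoid R) [IsLocalization M S] {I : Ideal R}
    (h : (1 : S) ∈ I.map (algebraMap R S)) : ∃ s ∈ M, s ∈ I := by
  obtain ⟨⟨a, s⟩, has⟩ := (mem_map_algebraMap_iff M S).mp h
  rw [one_mul, eq_iff_exists M] at has
  obtain ⟨c, hc⟩ := has
  exact ⟨c * s, M.mul_mem c.2 s.2, hc ▸ I.mul_mem_left _ a.2⟩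

/-- Let `M` be an `m × n` matrix over `F₂[D]` with a right inverse over
`F₂[D]`, let `U, V` be invertible over `F₂[D,D⁻¹]`, and suppose `M′ = U·M·V` has all
entries in `F₂[D]` (i.e. `M′` is the image of a polynomial matrix `M''`). Then for every
`1 ≤ k ≤ m` some power `D^t` lies in the ideal of `F₂[D]` generated by the `k × k`
minors of `M′`. -/
theorem stmt8 (m n : ℕ)
    (M : Matrix (Fin m) (Fin n) (Polynomial (ZMod 2)))
    (C : Matrix (Fin n) (Fin m) (Polynomial (ZMod 2))) (hC : M * C = 1)
    (U : Matrix (Fin m) (Fin m) (LaurentPolynomial (ZMod 2)))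
    (V : Matrix (Fin n) (Fin n) (LaurentPolynomial (ZMod 2)))
    (hU : IsUnit U.det) (hV : IsUnit V.det)
    (M'' : Matrix (Fin m) (Fin n) (Polynomial (ZMod 2)))
    (hM'' : M''.map (Polynomial.toLaurent (R := ZMod 2)) =
      U * (M.map (Polynomial.toLaurent (R := ZMod 2))) * V) :
    ∀ k : ℕ, 1 ≤ k → k ≤ m →
      ∃ t : ℕ, (Polynomial.X : Polynomial (ZMod 2)) ^ t ∈ Ideal.span (minors k M'') := by
  intro k _ hkm
  have hM : M.map Polynomial.toLaurent = U⁻¹ * M''.map Polynomial.toLaurent * V⁻¹ := by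
    rw [hM'', Matrix.mul_assoc, mul_nonsing_inv_cancel_right _ _ hV,
      nonsing_inv_mul_cancel_left _ _ hU]
  have hunit : (1 : (ZMod 2)[T;T⁻¹]) ∈ (Ideal.span (minors k M'')).map Polynomial.toLaurent := by
    rw [map_span_minors]
    apply span_minors_mul_mul_le k U⁻¹ _ V⁻¹
    rw [← hM, ← map_span_minors, ← map_one Polynomial.toLaurent]
    exact Ideal.mem_map_of_mem _ (one_mem_span_minors_of_mul_eq_one hkm hC)
  obtain ⟨_, ⟨t, rfl⟩, ht⟩ :=
    IsLocalization.exists_mem_of_one_mem_map (Submonoid.powers Polynomial.X) hunit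
  exact ⟨t, ht⟩
end

section
/- Let f be a polynomial over F₂ with constant coefficient 1 and degree at least 1. Then f is invertible as a formal power series over F₂, and its power-series inverse has purely periodic coefficients: there exists an integer N ≥ 1 such that for all n ≥ 0, the coefficient of D^{n+N} in f⁻¹ equals the coefficient of D^n in f⁻¹. (This is the repeating pattern of the long-division expansion of the rational function 1/f(D), which underlies the realization of infinite-depth operations by a periodic sequence of CNOT gates.) -/
/-!
Since `f(0) ≠ 0`, the root of `f` is a unit of the finite ring `K[X]/(f)`, so it has finite
order `N` and `f ∣ X^N - 1`. Writing `X^N - 1 = f g`, we get `(X^N - 1) f⁻¹ = g` in `K⟦X⟧`, and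
since `deg g < N` the coefficients of `f⁻¹` in degrees `≥ N` repeat those `N` steps below.
-/

open Polynomial
open scoped PowerSeries

theorem AdjoinRoot.isUnit_root_of_isUnit_coeff_zero {R : Type*} [CommRing R] {f : R[X]}
    (h : IsUnit (f.coeff 0)) : IsUnit (root f) := by
  have hf : root f * mk f f.divX + of f (f.coeff 0) = 0 := by
    have := congrArg (mk f) (X_mul_divX_add f)
    rwa [mk_self, map_add, map_mul, mk_X, mk_C] at this
  refine isUnit_of_mul_isUnit_left (y := mk f f.divX) ?_
  rw [eq_neg_of_add_eq_zero_left hf, IsUnit.neg_iff]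
  exact h.map _

theorem Polynomial.exists_dvd_X_pow_sub_one {R : Type*} [CommRing R] {f : R[X]}
    [Finite (AdjoinRoot f)] (h : IsUnit (f.coeff 0)) : ∃ N, 0 < N ∧ f ∣ X ^ N - 1 := by
  set u := (AdjoinRoot.isUnit_root_of_isUnit_coeff_zero h).unit
  refine ⟨orderOf u, orderOf_pos u, ?_⟩
  rw [← AdjoinRoot.mk_eq_zero, map_sub, map_pow, AdjoinRoot.mk_X, map_one, sub_eq_zero]
  have := congrArg Units.val (pow_orderOf_eq_one u)
  rwa [Units.val_pow_eq_pow_val, IsUnit.unit_spec, Units.val_one] at this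

theorem PowerSeries.periodic_coeff_of_X_pow_sub_one_mul {R : Type*} [CommRing R] {φ : R⟦X⟧}
    {g : R[X]} {N : ℕ} (h : (X ^ N - 1) * φ = (g : R⟦X⟧)) (hg : g.natDegree < N) :
    Function.Periodic (fun n ↦ coeff n φ) N := fun n ↦ by
  have := congrArg (coeff (n + N)) h
  rw [sub_mul, one_mul, map_sub, coeff_X_pow_mul, Polynomial.coeff_coe,
    coeff_eq_zero_of_natDegree_lt (by omega), sub_eq_zero] at this
  exact this.symm

theorem Polynomial.exists_periodic_coeff_inv {K : Type*} [Field K] [Finite K] {f : K[X]}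
    (h0 : f.coeff 0 ≠ 0) (hdeg : 0 < f.natDegree) :
    ∃ N, 0 < N ∧ Function.Periodic (fun n ↦ PowerSeries.coeff n (f : K⟦X⟧)⁻¹) N := by
  have hf : f ≠ 0 := by rintro rfl; simp at h0
  have := (AdjoinRoot.powerBasis hf).finite
  have : Finite (AdjoinRoot f) := Module.finite_of_finite K
  obtain ⟨N, hN, g, hfg⟩ := exists_dvd_X_pow_sub_one h0.isUnit
  have hg : g ≠ 0 := by
    rintro rfl
    exact X_pow_sub_C_ne_zero hN (1 : K) (by simpa using hfg)
  have hgN : g.natDegree < N := by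
    have := congrArg natDegree hfg
    rw [natDegree_mul hf hg, ← C_1, natDegree_X_pow_sub_C] at this
    omega
  refine ⟨N, hN, PowerSeries.periodic_coeff_of_X_pow_sub_one_mul ?_ hgN⟩
  have hinv : (f : K⟦X⟧) * (f : K⟦X⟧)⁻¹ = 1 := PowerSeries.mul_inv_cancel _ (by simpa using h0)
  have hfg' : (PowerSeries.X ^ N - 1 : K⟦X⟧) = f * g := by
    simpa using congrArg ((↑) : K[X] → K⟦X⟧) hfg
  rw [hfg', mul_right_comm, hinv, one_mul]

/-- A polynomial over `F₂` with constant coefficient `1` and degree at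
least `1` is invertible as a formal power series, and the coefficients of its
power-series inverse are purely periodic: for some `N ≥ 1`, the coefficient of
`D^{n+N}` in `f⁻¹` equals that of `D^n`, for all `n ≥ 0`. -/
theorem stmt12 (f : Polynomial (ZMod 2)) (hf : f.coeff 0 = 1) (hdeg : 1 ≤ f.natDegree) :
    IsUnit (↑f : PowerSeries (ZMod 2)) ∧
    ∃ N : ℕ, 1 ≤ N ∧ ∀ n : ℕ,
      PowerSeries.coeff (R := ZMod 2) (n + N) (↑f : PowerSeries (ZMod 2))⁻¹ =
      PowerSeries.coeff (R := ZMod 2) n (↑f : PowerSeries (ZMod 2))⁻¹ :=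
  ⟨PowerSeries.isUnit_iff_constantCoeff.2 (by simp [hf]),
    exists_periodic_coeff_inv (by simp [hf]) hdeg⟩
end
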